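/- Given a quasi-stationary distribution μ of P_I, define π by π(ε) = ∑_{i∈I} μ(i)P(i,ε) for ε ∈ ℰ and π(i) = γ μ(i) for i ∈ I, and define the stochastic matrix P^π on I ∪ ℰ by P^π(i,b) = P(i,b) for i ∈ I and P^π(ε,b) = π(b) for ε ∈ ℰ. Then π is a stationary distribution of P^π, i.e. πᵀ P^π = πᵀ. -/

import Mathlib

open Finset Matrix

namespace Matrix

variable {R ι m n : Type*} [CommRing R] [Fintype ι] [Fintype m]

theorem vecMul_replicateRow (v : ι → R) (w : n → R) :
    v ᵥ* replicateRow ι w = (∑ i, v i) • w := by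
  ext j
  simp [vecMul, dotProduct, replicateRow_apply, Finset.sum_mul]

theorem sum_vecMul_of_sum_row_eq_one [Fintype n] {A : Matrix m n R}
    (hA : ∀ i, ∑ j, A i j = 1) (v : m → R) : ∑ j, (v ᵥ* A) j = ∑ i, v i := by
  have hA1 : A *ᵥ 1 = 1 := funext fun i => by simpa [mulVec, dotProduct] using hA i
  rw [← dotProduct_one, ← dotProduct_mulVec, hA1, dotProduct_one]

end Matrix

section Restart

variable {R I E : Type*} [CommRing R] [Fintype I] [Fintype E]

/-- `π = μ A` keeps the mass `γ` in `I` and sends `1 - γ` to `E`; one step from `π` therefore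
yields `γ π` from `I` and, by restarting, `(1 - γ) π` from `E`. -/
theorem vecMul_fromRows_replicateRow_eq_self {A : Matrix I (I ⊕ E) R}
    (hA : ∀ i, ∑ b, A i b = 1) {μ : I → R} (hμ : ∑ i, μ i = 1) {γ : R}
    (hμA : (μ ᵥ* A) ∘ Sum.inl = γ • μ) :
    (μ ᵥ* A) ᵥ* fromRows A (replicateRow E (μ ᵥ* A)) = μ ᵥ* A := by
  set π := μ ᵥ* A
  have hmassI : ∑ i, π (Sum.inl i) = γ := by
    simp only [← Function.comp_apply (f := π), hμA, Pi.smul_apply, smul_eq_mul,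
      ← Finset.mul_sum, hμ, mul_one]
  have hmassE : ∑ ε, π (Sum.inr ε) = 1 - γ := by
    have htotal := sum_vecMul_of_sum_row_eq_one hA μ
    rw [hμ, Fintype.sum_sum_type, hmassI] at htotal
    exact eq_sub_of_add_eq' htotal
  calc π ᵥ* fromRows A (replicateRow E π)
      = (π ∘ Sum.inl) ᵥ* A + (∑ ε, π (Sum.inr ε)) • π := by
        rw [vecMul_fromRows, vecMul_replicateRow]; rfl
    _ = γ • π + (1 - γ) • π := by rw [hμA, smul_vecMul, hmassE]
    _ = π := by rw [← add_smul, add_sub_cancel, one_smul]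

end Restart

theorem pi_stationary_for_Ppi {I E : Type*} [Fintype I] [Fintype E]
    (P : Matrix (I ⊕ E) (I ⊕ E) ℝ)
    (PI : Matrix I I ℝ) (hPI : PI = P.submatrix Sum.inl Sum.inl)
    (hP1 : ∀ a, ∑ b, P a b = 1)
    (μ : I → ℝ) (hμ1 : ∑ i, μ i = 1)
    (γ : ℝ)
    (hqsd : μ ᵥ* PI = γ • μ)
    (π : I ⊕ E → ℝ)
    (hπI : ∀ i : I, π (Sum.inl i) = γ * μ i)
    (hπE : ∀ ε : E, π (Sum.inr ε) = ∑ i : I, μ i * P (Sum.inl i) (Sum.inr ε))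
    (Pπ : Matrix (I ⊕ E) (I ⊕ E) ℝ)
    (hPπI : ∀ (i : I) (b : I ⊕ E), Pπ (Sum.inl i) b = P (Sum.inl i) b)
    (hPπE : ∀ (ε : E) (b : I ⊕ E), Pπ (Sum.inr ε) b = π b) :
    π ᵥ* Pπ = π := by
  set A := P.submatrix Sum.inl id
  have hμA_inl : (μ ᵥ* A) ∘ Sum.inl = γ • μ := by
    rw [← hqsd, hPI]; rfl
  have hπ : π = μ ᵥ* A := by
    ext (i | ε)
    · rw [hπI, ← Function.comp_apply (f := μ ᵥ* A), hμA_inl]; rfl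
    · rw [hπE]; rfl
  have hPπ : Pπ = fromRows A (replicateRow E π) := by
    ext (i | ε) b
    · exact hPπI i b
    · exact hPπE ε b
  rw [hPπ, hπ]
  exact vecMul_fromRows_replicateRow_eq_self (fun i => hP1 (Sum.inl i)) hμ1 hμA_inl
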